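/- If the loss φ is bounded by c, then for any two perturbation kernels p₁ and p₂, the corresponding statistically robust risks differ by at most c times the expected total variation distance: |r^stat(p₁,f) − r^stat(p₂,f)| ≤ c · E_{(X,Y)∼p_D}[TV(p₁(·|X), p₂(·|X))]. -/

import Mathlib

/-!
By the layer-cake formula, for `0 ≤ g ≤ c` the difference `∫ g ∂μ - ∫ g ∂ν` is the integral
over `t ∈ (0, c]` of `μ {t ≤ g} - ν {t ≤ g}`, and each of these differences is at most
`tvDist μ ν`. Applying this to the perturbation measures at each input and integrating over the
data distribution gives the bound on the robust risks.
-/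

open MeasureTheory ProbabilityTheory

/-- Total variation distance between two measures: `sup_A |μ(A) − ν(A)|`. -/
noncomputable def tvDist {𝒳 : Type*} [MeasurableSpace 𝒳] (μ ν : Measure 𝒳) : ℝ :=
  ⨆ A : {A : Set 𝒳 // MeasurableSet A}, |(μ A).toReal - (ν A).toReal|

open Set

section tvDist

variable {α : Type*} [MeasurableSpace α] (μ ν : Measure α)
  [IsFiniteMeasure μ] [IsFiniteMeasure ν]

lemma tvDist_bddAbove :
    BddAbove
      (range fun A : {A : Set α // MeasurableSet A} => |(μ A).toReal - (ν A).toReal|) := by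
  refine ⟨μ.real univ + ν.real univ, ?_⟩
  rintro _ ⟨A, rfl⟩
  have hμ : μ.real A ≤ μ.real univ := measureReal_mono (subset_univ _)
  have hν : ν.real A ≤ ν.real univ := measureReal_mono (subset_univ _)
  change |μ.real A - ν.real A| ≤ _
  rw [abs_sub_le_iff]
  constructor <;> linarith [measureReal_nonneg (μ := μ) (s := A),
    measureReal_nonneg (μ := ν) (s := A)]

lemma abs_measureReal_sub_le_tvDist {A : Set α} (hA : MeasurableSet A) :
    |μ.real A - ν.real A| ≤ tvDist μ ν :=
  le_ciSup (tvDist_bddAbove μ ν) ⟨A, hA⟩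

lemma integrableOn_measureReal_le_Ioc {g : α → ℝ} (c : ℝ) :
    IntegrableOn (fun t => μ.real {a | t ≤ g a}) (Ioc 0 c) := by
  rcases le_total 0 c with hc | hc
  · have hanti : Antitone fun t => μ.real {a | t ≤ g a} := fun _ _ hst =>
      measureReal_mono fun _ ha => hst.trans ha
    exact (intervalIntegrable_iff_integrableOn_Ioc_of_le hc).1 hanti.intervalIntegrable
  · simp [Ioc_eq_empty_of_le hc]

lemma abs_integral_sub_integral_le_mul_tvDist {g : α → ℝ} (hg : Measurable g) {c : ℝ}
    (hc : 0 ≤ c) (hg0 : ∀ x, 0 ≤ g x) (hgc : ∀ x, g x ≤ c) :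
    |∫ x, g x ∂μ - ∫ x, g x ∂ν| ≤ c * tvDist μ ν := by
  have layer_cake (ρ : Measure α) [IsFiniteMeasure ρ] :
      ∫ x, g x ∂ρ = ∫ t in Ioc 0 c, ρ.real {a | t ≤ g a} :=
    (Integrable.of_bound hg.aestronglyMeasurable c
      (.of_forall fun x => (Real.norm_of_nonneg (hg0 x)).trans_le (hgc x)))
      |>.integral_eq_integral_Ioc_meas_le (.of_forall hg0) (.of_forall hgc)
  rw [layer_cake μ, layer_cake ν, ← integral_sub (integrableOn_measureReal_le_Ioc μ c)
    (integrableOn_measureReal_le_Ioc ν c), ← Real.norm_eq_abs]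
  calc _ ≤ tvDist μ ν * volume.real (Ioc 0 c) :=
        norm_setIntegral_le_of_norm_le_const measure_Ioc_lt_top fun t _ =>
          abs_measureReal_sub_le_tvDist μ ν (measurableSet_le measurable_const hg)
    _ = c * tvDist μ ν := by simp [hc, mul_comm]

end tvDist

section Kernel

variable {α β γ : Type*} [MeasurableSpace α] [MeasurableSpace β] [MeasurableSpace γ]

lemma integrable_integral_kernel_of_norm_le (ρ : Measure (α × β)) [IsFiniteMeasure ρ]
    (κ : Kernel α γ) [IsMarkovKernel κ] {h : γ → β → ℝ}
    (hh : Measurable (Function.uncurry h)) {c : ℝ} (hhc : ∀ z y, ‖h z y‖ ≤ c) :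
    Integrable (fun xy : α × β => ∫ z, h z xy.2 ∂κ xy.1) ρ := by
  have hmeas : StronglyMeasurable fun xy : α × β => ∫ z, h z xy.2 ∂κ xy.1 :=
    (hh.comp (measurable_snd.prodMk measurable_fst.snd)).stronglyMeasurable
      |>.integral_kernel_prod_right' (κ := κ.prodMkRight β)
  refine Integrable.of_bound hmeas.aestronglyMeasurable c (.of_forall fun xy => ?_)
  simpa using norm_integral_le_of_norm_le_const (μ := κ xy.1) (.of_forall fun z => hhc z xy.2)

lemma abs_integral_kernel_sub_le_mul_integral_tvDist (ρ : Measure (α × β)) [IsFiniteMeasure ρ]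
    (κ₁ κ₂ : Kernel α γ) [IsMarkovKernel κ₁] [IsMarkovKernel κ₂] {h : γ → β → ℝ}
    (hh : Measurable (Function.uncurry h)) {c : ℝ} (hc : 0 ≤ c) (hh0 : ∀ z y, 0 ≤ h z y)
    (hhc : ∀ z y, h z y ≤ c)
    (htv : Integrable (fun xy : α × β => tvDist (κ₁ xy.1) (κ₂ xy.1)) ρ) :
    |∫ xy, (∫ z, h z xy.2 ∂κ₁ xy.1) ∂ρ - ∫ xy, (∫ z, h z xy.2 ∂κ₂ xy.1) ∂ρ|
      ≤ c * ∫ xy, tvDist (κ₁ xy.1) (κ₂ xy.1) ∂ρ := by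
  have hnorm (z : γ) (y : β) : ‖h z y‖ ≤ c :=
    (Real.norm_of_nonneg (hh0 z y)).trans_le (hhc z y)
  have hint₁ := integrable_integral_kernel_of_norm_le ρ κ₁ hh hnorm
  have hint₂ := integrable_integral_kernel_of_norm_le ρ κ₂ hh hnorm
  rw [← integral_sub hint₁ hint₂, ← integral_const_mul]
  refine abs_integral_le_integral_abs.trans
    (integral_mono (hint₁.sub hint₂).abs (htv.const_mul c) fun xy => ?_)
  exact abs_integral_sub_integral_le_mul_tvDist _ _ (hh.comp measurable_prodMk_right) hc
    (hh0 · xy.2) (hhc · xy.2)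

end Kernel

/-- if the loss is bounded by `c`, the statistically robust risks under two
perturbation kernels differ by at most `c` times the expected total variation distance. -/
theorem srr_tv_stability
    {d M : ℕ} {𝒴 : Type*} [MeasurableSpace 𝒴]
    (pD : Measure ((Fin d → ℝ) × 𝒴)) [IsProbabilityMeasure pD]
    (κ₁ κ₂ : Kernel (Fin d → ℝ) (Fin d → ℝ)) [IsMarkovKernel κ₁] [IsMarkovKernel κ₂]
    (f : (Fin d → ℝ) → (Fin M → ℝ)) (hf : Measurable f)
    (φ : (Fin M → ℝ) → 𝒴 → ℝ)
    (hφm : Measurable (Function.uncurry φ))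
    (c : ℝ) (hc : 0 ≤ c)
    (hφb : ∀ a y, φ a y ∈ Set.Icc (0 : ℝ) c)
    (htv : Integrable (fun xy : (Fin d → ℝ) × 𝒴 => tvDist (κ₁ xy.1) (κ₂ xy.1)) pD) :
    |(∫ xy, (∫ x', φ (f x') xy.2 ∂(κ₁ xy.1)) ∂pD)
        - (∫ xy, (∫ x', φ (f x') xy.2 ∂(κ₂ xy.1)) ∂pD)|
      ≤ c * ∫ xy, tvDist (κ₁ xy.1) (κ₂ xy.1) ∂pD :=
  abs_integral_kernel_sub_le_mul_integral_tvDist pD κ₁ κ₂ (h := fun z y => φ (f z) y)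
    (hφm.comp (hf.prodMap measurable_id)) hc (fun z y => (hφb (f z) y).1)
    (fun z y => (hφb (f z) y).2) htv
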